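/- arXiv:1402.0834 — 2 statements merged into one kernel-verified Lean document; each statement's English description precedes it below -/
import Mathlib

section
/- Let d ≥ 2, r ≥ 1, and let u and v be distinct points of S^∞_r in ℤ^d. Then there exist two paths Q₁ and Q₂ in the grid graph, all of whose vertices lie in S^∞_r, which are vertex-disjoint (no vertex belongs to both), such that one of them joins u to one of the points e_r, −e_r and the other joins v to the other of these two points. (A single vertex counts as a path of length 0, to cover the case where u or v equals e_r or −e_r.) -/
/-- The `ℓ1`-norm of a point of `ℤ^d`. -/
def norm1 {d : ℕ} (x : Fin d → ℤ) : ℤ := ∑ i, |x i|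

/-- Grid adjacency in `ℤ^d`: `u` and `v` are adjacent iff `‖u - v‖₁ = 1`. -/
def Adj {d : ℕ} (u v : Fin d → ℤ) : Prop := norm1 (u - v) = 1

/-- The `ℓ∞`-sphere `S^∞_r = {v : ‖v‖_∞ = r}` in `ℤ^d`. -/
def Sinf (d : ℕ) (r : ℤ) : Set (Fin d → ℤ) := {x | (∀ i, |x i| ≤ r) ∧ ∃ i, |x i| = r}

/-- The point `e_m = (m, 0, …, 0)` of `ℤ^d`. -/
def eVec (d : ℕ) (m : ℤ) : Fin d → ℤ := fun i => if (i : ℕ) = 0 then m else 0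

/-- `L` is a path from `x` to `y` all of whose vertices lie in `A`; a single
vertex counts as a path of length `0`. -/
def IsPathInFromTo {d : ℕ} (A : Set (Fin d → ℤ)) (L : List (Fin d → ℤ))
    (x y : Fin d → ℤ) : Prop :=
  ∃ h : L ≠ [],
    L.Nodup ∧ L.Chain' Adj ∧ (∀ z ∈ L, z ∈ A) ∧ L.head h = x ∧ L.getLast h = y

/-! The proof orders the sphere by a height function for which `e_r` is the only point without
a higher neighbour on the sphere and `-e_r` the only point without a lower one. Climbing greedily
from the higher of `u`, `v` to `e_r` and descending greedily from the other one to `-e_r` gives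
two paths that are separated by height, hence disjoint. -/

variable {d : ℕ}

section Paths

variable {A : Set (Fin d → ℤ)}

theorem isPathInFromTo_singleton {x : Fin d → ℤ} (hx : x ∈ A) : IsPathInFromTo A [x] x x :=
  ⟨List.cons_ne_nil x [], List.nodup_singleton x, List.isChain_singleton x,
    by simpa using hx, rfl, rfl⟩

theorem IsPathInFromTo.cons {L : List (Fin d → ℤ)} {x y t : Fin d → ℤ}
    (hL : IsPathInFromTo A L y t) (hx : x ∈ A) (hxy : Adj x y) (hxL : x ∉ L) :
    IsPathInFromTo A (x :: L) x t := by
  obtain ⟨hne, hnd, hch, hmem, rfl, rfl⟩ := hL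
  refine ⟨List.cons_ne_nil x L, List.nodup_cons.2 ⟨hxL, hnd⟩, hch.cons ?_, ?_, rfl,
    List.getLast_cons hne⟩
  · simpa [List.head?_eq_some_head hne] using hxy
  · simpa [hx] using hmem

theorem exists_isPathInFromTo_of_exists_adj_lt (hA : A.Finite) (φ : (Fin d → ℤ) → ℤ)
    (t : Fin d → ℤ) (hstep : ∀ x ∈ A, x ≠ t → ∃ y ∈ A, Adj x y ∧ φ x < φ y)
    (x : Fin d → ℤ) (hx : x ∈ A) :
    ∃ L, IsPathInFromTo A L x t ∧ ∀ z ∈ L, z = x ∨ φ x < φ z := by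
  obtain ⟨B, hB⟩ := (hA.image φ).bddAbove
  induction hn : (B - φ x).toNat using Nat.strong_induction_on generalizing x with
  | _ n ih =>
    by_cases hxt : x = t
    · subst hxt
      exact ⟨[x], isPathInFromTo_singleton hx, by simp⟩
    obtain ⟨y, hy, hxy, hlt⟩ := hstep x hx hxt
    have hyB : φ y ≤ B := hB ⟨y, hy, rfl⟩
    obtain ⟨L, hL, hLφ⟩ := ih _ (by omega) y hy rfl
    have hxL : x ∉ L := fun hx' => by
      rcases hLφ x hx' with rfl | h <;> omega
    refine ⟨x :: L, hL.cons hx hxy hxL, ?_⟩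
    rintro z (_ | ⟨_, hz⟩)
    · exact Or.inl rfl
    · rcases hLφ z hz with rfl | h <;> omega

end Paths

theorem norm1_update (x : Fin d → ℤ) (i : Fin d) (b : ℤ) :
    norm1 (Function.update x i b) = norm1 x - |x i| + |b| := by
  unfold norm1
  rw [← Finset.add_sum_erase _ _ (Finset.mem_univ i),
    ← Finset.add_sum_erase _ (fun j => |x j|) (Finset.mem_univ i), Function.update_self,
    Finset.sum_congr rfl fun j hj => by rw [Function.update_of_ne (Finset.ne_of_mem_erase hj)]]
  ring

theorem adj_update_self (x : Fin d → ℤ) (i : Fin d) {b : ℤ} (h : |x i - b| = 1) :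
    Adj x (Function.update x i b) := by
  have : x - Function.update x i b = Pi.single i (x i - b) := by
    ext j
    rcases eq_or_ne j i with rfl | hj
    · simp
    · simp [hj]
  rw [Adj, this, norm1, Finset.sum_eq_single i (fun j _ hj => by simp [hj]) (by simp)]
  simpa using h

theorem Sinf_finite (d : ℕ) (r : ℤ) : (Sinf d r).Finite :=
  (Set.Finite.pi fun _ => Set.finite_Icc (-r) r).subset fun _ hx i _ => abs_le.1 (hx.1 i)

theorem update_mem_Sinf {r : ℤ} {x : Fin d → ℤ} (hx : ∀ i, |x i| ≤ r) {j : Fin d} {b : ℤ}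
    (hb : |b| ≤ r) {i : Fin d} (hij : i ≠ j) (hi : |x i| = r) :
    Function.update x j b ∈ Sinf d r := by
  refine ⟨fun k => ?_, i, by rwa [Function.update_of_ne hij]⟩
  rcases eq_or_ne k j with rfl | hk
  · simpa using hb
  · simpa [hk] using hx k

theorem Int.exists_abs_sub_eq_one_abs_eq_add_one (a : ℤ) :
    ∃ b : ℤ, |a - b| = 1 ∧ |b| = |a| + 1 := by
  rcases le_or_gt 0 a with h | h
  · exact ⟨a + 1, by simp, by rw [abs_of_nonneg h, abs_of_nonneg (by omega)]⟩
  · exact ⟨a - 1, by simp, by rw [abs_of_neg h, abs_of_neg (by omega)]; ring⟩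

theorem Int.exists_abs_sub_eq_one_abs_eq_sub_one {a : ℤ} (ha : a ≠ 0) :
    ∃ b : ℤ, |a - b| = 1 ∧ |b| = |a| - 1 := by
  rcases lt_or_gt_of_ne ha with h | h
  · exact ⟨a + 1, by simp, by rw [abs_of_neg h, abs_of_nonpos (by omega)]; ring⟩
  · exact ⟨a - 1, by simp, by rw [abs_of_pos h, abs_of_nonneg (by omega)]⟩

section FirstCoordinate

variable [NeZero d]

theorem eVec_eq_single (m : ℤ) : eVec d m = Pi.single 0 m := by
  ext i
  simp [eVec, Pi.single_apply, Fin.val_eq_zero_iff]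

/-- On the face `x 0 = r` the height grows towards the centre `e_r`, on the face `x 0 = -r`
it grows away from the centre `-e_r`; the factor in parentheses is at least `1` on the sphere
and does not depend on `x 0`, so the height also grows with `x 0`. -/
def height (r : ℤ) (x : Fin d → ℤ) : ℤ :=
  x 0 * (d * r + 1 - norm1 (Function.update x 0 0))

theorem height_update_zero (r a : ℤ) (x : Fin d → ℤ) :
    height r (Function.update x 0 a) = a * (d * r + 1 - norm1 (Function.update x 0 0)) := by
  simp [height]

theorem height_update_of_ne (r b : ℤ) (x : Fin d → ℤ) {j : Fin d} (hj : j ≠ 0) :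
    height r (Function.update x j b) =
      x 0 * (d * r + 1 - (norm1 (Function.update x 0 0) - |x j| + |b|)) := by
  rw [height, Function.update_of_ne hj.symm, Function.update_comm hj, norm1_update,
    Function.update_of_ne hj]

theorem norm1_update_zero_lt {r : ℤ} {x : Fin d → ℤ} (hx : ∀ i, |x i| ≤ r) :
    norm1 (Function.update x 0 0) < d * r + 1 := by
  have : norm1 (Function.update x 0 0) ≤ d * r := by
    calc norm1 (Function.update x 0 0) ≤ ∑ _i : Fin d, r :=
          Finset.sum_le_sum fun i _ => by
            rcases eq_or_ne i 0 with rfl | hi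
            · simpa using (abs_nonneg (x 0)).trans (hx 0)
            · simpa [hi] using hx i
      _ = d * r := by simp
  omega

theorem exists_adj_height_gt {r : ℤ} (hr : 0 < r) (hd : 2 ≤ d) {x : Fin d → ℤ}
    (hx : x ∈ Sinf d r) (hxr : x ≠ eVec d r) :
    ∃ y ∈ Sinf d r, Adj x y ∧ height r x < height r y := by
  obtain ⟨hxb, i, hi⟩ := hx
  have hpos := norm1_update_zero_lt hxb
  have hx0 := abs_le.1 (hxb 0)
  by_cases htop : x 0 = r
  · obtain ⟨j, hj0, hj⟩ : ∃ j, j ≠ 0 ∧ x j ≠ 0 := by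
      by_contra! h
      refine hxr (funext fun k => ?_)
      rcases eq_or_ne k 0 with rfl | hk
      · simp [eVec_eq_single, htop]
      · simp [eVec_eq_single, hk, h k hk]
    obtain ⟨b, hxb', hb⟩ := Int.exists_abs_sub_eq_one_abs_eq_sub_one hj
    refine ⟨_, update_mem_Sinf hxb (by linarith [hxb j]) hj0.symm (by rw [htop, abs_of_pos hr]),
      adj_update_self x j hxb', ?_⟩
    rw [height_update_of_ne r b x hj0, height, hb, htop]
    nlinarith
  by_cases hside : ∃ j, j ≠ 0 ∧ |x j| = r
  · obtain ⟨j, hj0, hj⟩ := hside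
    refine ⟨_, update_mem_Sinf hxb (b := x 0 + 1) (by rw [abs_le]; omega) hj0 hj,
      adj_update_self x 0 (by simp), ?_⟩
    rw [height_update_zero, height]
    nlinarith
  · push Not at hside
    have hbot : x 0 = -r := by
      rcases eq_or_ne i 0 with rfl | hi0
      · rcases abs_eq hr.le |>.1 hi with h | h <;> omega
      · exact absurd hi (hside i hi0)
    have := Fin.nontrivial_iff_two_le.2 hd
    obtain ⟨j, hj0⟩ := exists_ne (0 : Fin d)
    obtain ⟨b, hxb', hb⟩ := Int.exists_abs_sub_eq_one_abs_eq_add_one (x j)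
    have hjr : |x j| < r := (hxb j).lt_of_ne (hside j hj0)
    refine ⟨_, update_mem_Sinf hxb (by rw [hb]; omega) hj0.symm
      (by rw [hbot, abs_neg, abs_of_pos hr]), adj_update_self x j hxb', ?_⟩
    rw [height_update_of_ne r b x hj0, height, hb, hbot]
    nlinarith

def reflect (x : Fin d → ℤ) : Fin d → ℤ := Function.update x 0 (-x 0)

theorem reflect_reflect (x : Fin d → ℤ) : reflect (reflect x) = x := by
  simp [reflect]

theorem abs_reflect_apply (x : Fin d → ℤ) (i : Fin d) : |reflect x i| = |x i| := by
  rcases eq_or_ne i 0 with rfl | hi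
  · simp [reflect]
  · simp [reflect, hi]

theorem reflect_mem_Sinf {r : ℤ} {x : Fin d → ℤ} (hx : x ∈ Sinf d r) : reflect x ∈ Sinf d r := by
  obtain ⟨hb, i, hi⟩ := hx
  exact ⟨fun j => (abs_reflect_apply x j).trans_le (hb j), i, (abs_reflect_apply x i).trans hi⟩

theorem adj_reflect {x y : Fin d → ℤ} (h : Adj x y) : Adj (reflect x) (reflect y) := by
  have : reflect x - reflect y = reflect (x - y) := by
    ext i
    rcases eq_or_ne i 0 with rfl | hi
    · simp [reflect]; ring
    · simp [reflect, hi]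
  simpa only [Adj, norm1, this, abs_reflect_apply] using h

theorem reflect_eVec (m : ℤ) : reflect (eVec d m) = eVec d (-m) := by
  ext i
  rcases eq_or_ne i 0 with rfl | hi
  · simp [reflect, eVec_eq_single]
  · simp [reflect, eVec_eq_single, hi]

theorem height_reflect (r : ℤ) (x : Fin d → ℤ) : height r (reflect x) = -height r x := by
  rw [reflect, height_update_zero, height]
  ring

theorem exists_adj_height_lt {r : ℤ} (hr : 0 < r) (hd : 2 ≤ d) {x : Fin d → ℤ}
    (hx : x ∈ Sinf d r) (hxr : x ≠ eVec d (-r)) :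
    ∃ y ∈ Sinf d r, Adj x y ∧ height r y < height r x := by
  have hxr' : reflect x ≠ eVec d r := fun h => hxr <| by
    rw [← reflect_reflect x, h, reflect_eVec]
  obtain ⟨y, hy, hxy, hlt⟩ := exists_adj_height_gt hr hd (reflect_mem_Sinf hx) hxr'
  refine ⟨reflect y, reflect_mem_Sinf hy, reflect_reflect x ▸ adj_reflect hxy, ?_⟩
  rw [height_reflect] at hlt ⊢
  omega

end FirstCoordinate

theorem notMem_and_mem_of_apply_le {φ : (Fin d → ℤ) → ℤ} {u v : Fin d → ℤ}
    {L₁ L₂ : List (Fin d → ℤ)} (huv : u ≠ v) (h : φ u ≤ φ v) (h₁ : ∀ z ∈ L₁, z = u ∨ φ z < φ u)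
    (h₂ : ∀ z ∈ L₂, z = v ∨ φ v < φ z) (x : Fin d → ℤ) : ¬ (x ∈ L₁ ∧ x ∈ L₂) := by
  rintro ⟨hx₁, hx₂⟩
  rcases h₁ x hx₁ with rfl | h₁ <;> rcases h₂ x hx₂ with rfl | h₂
  · exact huv rfl
  all_goals omega

theorem statement10 (d : ℕ) (hd : 2 ≤ d) (r : ℤ) (hr : 1 ≤ r)
    (u v : Fin d → ℤ) (hu : u ∈ Sinf d r) (hv : v ∈ Sinf d r) (huv : u ≠ v) :
    ∃ Q₁ Q₂ : List (Fin d → ℤ),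
      (∀ x, ¬ (x ∈ Q₁ ∧ x ∈ Q₂)) ∧
      ((IsPathInFromTo (Sinf d r) Q₁ u (eVec d r) ∧
          IsPathInFromTo (Sinf d r) Q₂ v (eVec d (-r))) ∨
        (IsPathInFromTo (Sinf d r) Q₁ u (eVec d (-r)) ∧
          IsPathInFromTo (Sinf d r) Q₂ v (eVec d r))) := by
  have : NeZero d := ⟨by omega⟩
  have hr₀ : 0 < r := by omega
  have up := exists_isPathInFromTo_of_exists_adj_lt (Sinf_finite d r) (height r) (eVec d r)
    fun x hx hxr => exists_adj_height_gt hr₀ hd hx hxr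
  have down := exists_isPathInFromTo_of_exists_adj_lt (Sinf_finite d r) (-height r)
    (eVec d (-r)) fun x hx hxr => by
      simpa using exists_adj_height_lt hr₀ hd hx hxr
  rcases le_total (height r u) (height r v) with h | h
  · obtain ⟨Q₁, hQ₁, h₁⟩ := down u hu
    obtain ⟨Q₂, hQ₂, h₂⟩ := up v hv
    exact ⟨Q₁, Q₂, notMem_and_mem_of_apply_le huv h (by simpa using h₁) h₂, Or.inr ⟨hQ₁, hQ₂⟩⟩
  · obtain ⟨Q₁, hQ₁, h₁⟩ := up u hu
    obtain ⟨Q₂, hQ₂, h₂⟩ := down v hv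
    refine ⟨Q₁, Q₂, fun x hx => ?_, Or.inl ⟨hQ₁, hQ₂⟩⟩
    exact notMem_and_mem_of_apply_le huv.symm h (by simpa using h₂) h₁ x hx.symm
end

section
/- Let d ≥ 2 and r ≥ 1. The subgraph of the grid graph ℤ^d induced on the ℓ∞-sphere S^∞_r is 2-connected: it has at least 3 vertices, it is connected, and for every vertex w ∈ S^∞_r the subgraph induced on S^∞_r \ {w} is still connected. -/
/-- The set `A` is connected in the grid graph: any two of its points are joined
by a path all of whose vertices lie in `A`. -/
def ConnectedIn {d : ℕ} (A : Set (Fin d → ℤ)) : Prop :=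
  ∀ a ∈ A, ∀ b ∈ A,
    ∃ (L : List (Fin d → ℤ)) (h : L ≠ []),
      L.Nodup ∧ L.Chain' Adj ∧ (∀ x ∈ L, x ∈ A) ∧ L.head h = a ∧ L.getLast h = b

/-!
Every point `x ≠ w` of the sphere reaches a fixed corner `Q` of the cube `[-r, r]^d` avoiding `w`,
where `Q` is chosen to differ from `w` in every coordinate. The basic move: a point `x` of the
sphere reaches a corner `q` along a monotone staircase inside the box spanned by `x` and `q`,
which misses `w` as soon as one coordinate of `w` lies outside the corresponding interval. From
`x` we pick a coordinate `i` with `x i ≠ w i` and go to the corner `u` that agrees with `Q` except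
that `u i = ±r` lies on the far side of `x i` from `w i`; then `u` and `Q` share a coordinate
(since `d ≥ 2`) which `w` does not have, so one more staircase reaches `Q`.
-/

open Function Set

section Grid

variable {d : ℕ}

lemma norm1_neg (x : Fin d → ℤ) : norm1 (-x) = norm1 x := by
  simp [norm1]

lemma adj_comm {u v : Fin d → ℤ} : Adj u v ↔ Adj v u := by
  rw [Adj, Adj, ← neg_sub, norm1_neg]

lemma not_adj_self (x : Fin d → ℤ) : ¬ Adj x x := by
  simp [Adj, norm1]

lemma adj_update_add_one (x : Fin d → ℤ) (i : Fin d) (t : ℤ) :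
    Adj (update x i t) (update x i (t + 1)) := by
  rw [Adj, norm1, Finset.sum_eq_single i]
  · simp
  · intro k _ hk
    simp [update_of_ne hk]
  · simp

def gridOn (A : Set (Fin d → ℤ)) : SimpleGraph (Fin d → ℤ) where
  Adj x y := x ∈ A ∧ y ∈ A ∧ _root_.Adj x y
  symm := ⟨fun _ _ h => ⟨h.2.1, h.1, adj_comm.mp h.2.2⟩⟩
  loopless := ⟨fun x h => not_adj_self x h.2.2⟩

variable {A : Set (Fin d → ℤ)}

lemma mem_of_mem_support_gridOn {a b : Fin d → ℤ} (p : (gridOn A).Walk a b) (ha : a ∈ A) :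
    ∀ x ∈ p.support, x ∈ A := by
  induction p with
  | nil => simpa using ha
  | cons h p ih =>
    simp only [SimpleGraph.Walk.support_cons, List.mem_cons, forall_eq_or_imp]
    exact ⟨ha, ih h.2.1⟩

lemma connectedIn_of_reachable (h : ∀ a ∈ A, ∀ b ∈ A, (gridOn A).Reachable a b) :
    ConnectedIn A := by
  classical
  intro a ha b hb
  obtain ⟨p⟩ := h a ha b hb
  let q := p.toPath
  refine ⟨q.1.support, q.1.support_ne_nil, q.2.support_nodup,
    q.1.isChain_adj_support.imp fun _ _ hxy => hxy.2.2,
    mem_of_mem_support_gridOn q.1 ha, q.1.head_support, q.1.getLast_support⟩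

lemma reachable_update_of_le (x : Fin d → ℤ) (i : Fin d) {a b : ℤ} (hab : a ≤ b)
    (h : ∀ t ∈ Icc a b, update x i t ∈ A) :
    (gridOn A).Reachable (update x i a) (update x i b) := by
  induction b, hab using Int.leInduction with
  | base => rfl
  | succ n han ih =>
    have hn : ∀ t ∈ Icc a n, update x i t ∈ A := fun t ht =>
      h t ⟨ht.1, ht.2.trans (Int.le_add_one le_rfl)⟩
    have hstep : (gridOn A).Adj (update x i n) (update x i (n + 1)) :=
      ⟨hn n ⟨han, le_rfl⟩, h (n + 1) ⟨Int.le_add_one han, le_rfl⟩, adj_update_add_one x i n⟩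
    exact (ih hn).trans hstep.reachable

lemma reachable_update (x : Fin d → ℤ) (i : Fin d) (c : ℤ)
    (h : ∀ t ∈ uIcc (x i) c, update x i t ∈ A) :
    (gridOn A).Reachable x (update x i c) := by
  conv_lhs => rw [← update_eq_self i x]
  rcases le_total (x i) c with hle | hle
  · exact reachable_update_of_le x i hle fun t ht => h t (Icc_subset_uIcc ht)
  · exact (reachable_update_of_le x i hle fun t ht => h t (Icc_subset_uIcc' ht)).symm

lemma mem_uIcc_pi {x y z : Fin d → ℤ} : z ∈ uIcc x y ↔ ∀ k, z k ∈ uIcc (x k) (y k) := by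
  rw [← pi_univ_uIcc, mem_univ_pi]

lemma reachable_of_uIcc_subset {x y : Fin d → ℤ} (h : uIcc x y ⊆ A) :
    (gridOn A).Reachable x y := by
  classical
  suffices ∀ s : Finset (Fin d), (gridOn A).Reachable x (s.piecewise y x) by
    simpa using this Finset.univ
  intro s
  induction s using Finset.induction_on with
  | empty => simp
  | insert j s hj ih =>
    rw [Finset.piecewise_insert]
    refine ih.trans (reachable_update _ j _ fun t ht => h (mem_uIcc_pi.mpr fun k => ?_))
    rcases eq_or_ne k j with rfl | hk
    · simpa [Finset.piecewise_eq_of_notMem _ _ _ hj] using ht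
    · rw [update_of_ne hk, Finset.piecewise]
      split_ifs
      exacts [right_mem_uIcc, left_mem_uIcc]

end Grid

section Sphere

variable {d : ℕ} {r : ℤ}

lemma abs_le_of_mem_uIcc {x q z : Fin d → ℤ} (hx : ∀ i, |x i| ≤ r) (hq : ∀ i, |q i| ≤ r)
    (hz : z ∈ uIcc x q) (i : Fin d) : |z i| ≤ r :=
  abs_le.mpr <| uIcc_subset_Icc (abs_le.mp (hx i)) (abs_le.mp (hq i)) (mem_uIcc_pi.mp hz i)

/-- From a point of the sphere to a corner `q` through the box they span, keeping one coordinate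
extreme throughout: first that of `x`, then, for the last coordinate, one of `q`'s. -/
lemma reachable_corner [Nontrivial (Fin d)] {w x q : Fin d → ℤ} (hx : x ∈ Sinf d r)
    (hq : ∀ i, |q i| = r) (hw : w ∉ uIcc x q) :
    (gridOn (Sinf d r \ {w})).Reachable x q := by
  have hbox : ∀ z ∈ uIcc x q, ∀ j, |z j| = r → z ∈ Sinf d r \ {w} := fun z hz j hzj =>
    ⟨⟨abs_le_of_mem_uIcc hx.1 (fun i => (hq i).le) hz, j, hzj⟩, fun h => hw (h ▸ hz)⟩
  obtain ⟨j, hj⟩ := hx.2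
  obtain ⟨k, hk⟩ := exists_ne j
  set y := update q j (x j)
  have hy : y ∈ uIcc x q := mem_uIcc_pi.mpr fun i => by
    rcases eq_or_ne i j with rfl | hi
    · simp [y]
    · simp [y, update_of_ne hi]
  have hxy : (gridOn (Sinf d r \ {w})).Reachable x y := reachable_of_uIcc_subset fun z hz =>
    hbox z (uIcc_subset_uIcc left_mem_uIcc hy hz) j <| by
      rwa [show z j = x j by simpa [y] using mem_uIcc_pi.mp hz j]
  have hyq : (gridOn (Sinf d r \ {w})).Reachable y q := reachable_of_uIcc_subset fun z hz =>
    hbox z (uIcc_subset_uIcc hy right_mem_uIcc hz) k <| by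
      rw [show z k = q k by simpa [y, update_of_ne hk] using mem_uIcc_pi.mp hz k, hq k]
  exact hxy.trans hyq

lemma connectedIn_Sinf_diff_singleton [Nontrivial (Fin d)] (hr : 1 ≤ r) (w : Fin d → ℤ) :
    ConnectedIn (Sinf d r \ {w}) := by
  have habs : ∀ s : ℤ, s = r ∨ s = -r → |s| = r := fun s => (abs_eq (by omega)).mpr
  have hcorner : ∀ q : Fin d → ℤ, (∀ i, |q i| = r) → q ∈ Sinf d r := fun q hq =>
    ⟨fun i => (hq i).le, Classical.arbitrary _, hq _⟩
  have notMem_uIcc_of_apply :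
      ∀ {x y : Fin d → ℤ} (i : Fin d), w i ∉ uIcc (x i) (y i) → w ∉ uIcc x y :=
    fun i hi hw => hi (mem_uIcc_pi.mp hw i)
  set Q : Fin d → ℤ := fun i => if w i = r then -r else r
  have hQ : ∀ i, |Q i| = r := fun i => habs _ (by grind)
  have hQw : ∀ i, Q i ≠ w i := fun i => by grind
  suffices h : ∀ x ∈ Sinf d r \ {w}, (gridOn (Sinf d r \ {w})).Reachable x Q from
    connectedIn_of_reachable fun a ha b hb => (h a ha).trans (h b hb).symm
  rintro x ⟨hx, hxw⟩
  obtain ⟨i, hi⟩ : ∃ i, x i ≠ w i := Function.ne_iff.mp hxw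
  obtain ⟨k, hk⟩ := exists_ne i
  set u := update Q i (if w i < x i then r else -r)
  have hu : ∀ j, |u j| = r := fun j => by
    rcases eq_or_ne j i with rfl | hj
    · simp only [u, update_self]; exact habs _ (by grind)
    · simp only [u, update_of_ne hj]; exact hQ j
  have hxu := reachable_corner hx hu <| notMem_uIcc_of_apply i <| by
    have := abs_le.mp (hx.1 i)
    simp only [u, update_self, mem_uIcc]
    grind
  have huQ := reachable_corner (hcorner u hu) hQ <| notMem_uIcc_of_apply k <| by
    simpa [u, update_of_ne hk] using (hQw k).symm
  exact hxu.trans huQ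

lemma exists_three_distinct_mem_Sinf [Nontrivial (Fin d)] (hr : 1 ≤ r) :
    ∃ a b c : Fin d → ℤ, a ∈ Sinf d r ∧ b ∈ Sinf d r ∧ c ∈ Sinf d r ∧
      a ≠ b ∧ a ≠ c ∧ b ≠ c := by
  obtain ⟨i, k, hik⟩ := exists_pair_ne (Fin d)
  have hcorner : ∀ q : Fin d → ℤ, (∀ j, q j = r ∨ q j = -r) → q ∈ Sinf d r := fun q hq =>
    ⟨fun j => ((abs_eq (by omega)).mpr (hq j)).le, i, (abs_eq (by omega)).mpr (hq i)⟩
  refine ⟨fun _ => r, fun _ => -r, update (fun _ => r) i (-r), hcorner _ (by simp),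
    hcorner _ (by simp), hcorner _ fun j => ?_, fun h => ?_, fun h => ?_, fun h => ?_⟩
  · rcases eq_or_ne j i with rfl | hj <;> simp [update_of_ne, *]
  · have : r = -r := congrFun h i
    omega
  · have := congrFun h i; simp only [update_self] at this; omega
  · have := congrFun h k; simp only [update_of_ne hik.symm] at this; omega

end Sphere

theorem statement11 (d : ℕ) (hd : 2 ≤ d) (r : ℤ) (hr : 1 ≤ r) :
    (∃ a b c : Fin d → ℤ, a ∈ Sinf d r ∧ b ∈ Sinf d r ∧ c ∈ Sinf d r ∧
      a ≠ b ∧ a ≠ c ∧ b ≠ c) ∧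
    ConnectedIn (Sinf d r) ∧
    ∀ w ∈ Sinf d r, ConnectedIn (Sinf d r \ {w}) := by
  have : Nontrivial (Fin d) := Fin.nontrivial_iff_two_le.mpr hd
  have hw : (fun _ => r + 1 : Fin d → ℤ) ∉ Sinf d r := fun h => by
    have : |r + 1| ≤ r := h.1 (Classical.arbitrary _)
    rw [abs_of_pos (by omega)] at this
    omega
  refine ⟨exists_three_distinct_mem_Sinf hr, ?_, fun w _ => connectedIn_Sinf_diff_singleton hr w⟩
  rw [← sdiff_singleton_eq_self hw]
  exact connectedIn_Sinf_diff_singleton hr _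
end
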